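/- arXiv:1507.02069 — 2 statements merged into one kernel-verified Lean document; each statement's English description precedes it below -/
import Mathlib

section
/- Let G be a finite weighted graph on vertex set V with symmetric nonnegative weights w and weighted degree 1 at each vertex. Define φ_δ(G) = min over nonempty S with |S| ≤ δ·|V| of 1 − w(S,S)/|S|, and φ̂_δ(G) = min over nonempty S, T with |S| = |T| ≤ δ·|V| of 1 − w(S,T)/|S|, where w(S,T) = Σ_{i∈S, j∈T} w(i,j). Then for any δ ≤ 1/2, φ̂_{δ/2}(G) ≥ φ_δ(G)/2. -/
open Finset

/-- total weight between two vertex subsets -/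
def wSets {V : Type*} [Fintype V] (w : V → V → ℝ) (S T : Finset V) : ℝ :=
  ∑ i ∈ S, ∑ j ∈ T, w i j

/-- For every pair (S, T) feasible for the (δ/2)-small-set combinatorial gap,
there is a set U feasible for the δ-small-set expansion whose expansion is at most
twice the combinatorial-gap value of (S, T).  Hence φ̂_{δ/2}(G) ≥ φ_δ(G)/2. -/
theorem small_set_gap_vs_expansion {V : Type*} [Fintype V] [DecidableEq V]
    (w : V → V → ℝ) (hsymm : ∀ i j, w i j = w j i) (hnonneg : ∀ i j, 0 ≤ w i j)
    (hdeg : ∀ i, ∑ j, w i j = 1)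
    (δ : ℝ) (hδ0 : 0 < δ) (hδ : δ ≤ 1 / 2)
    (S T : Finset V) (hS : S.Nonempty) (hT : T.Nonempty)
    (hcard : S.card = T.card) (hsize : (S.card : ℝ) ≤ (δ / 2) * Fintype.card V) :
    ∃ U : Finset V, U.Nonempty ∧ (U.card : ℝ) ≤ δ * Fintype.card V ∧
      1 - wSets w U U / U.card ≤ 2 * (1 - wSets w S T / S.card) := by
  classical
  set U : Finset V := S ∪ T with hU
  set I : Finset V := S ∩ T with hI
  have hprod : ∀ A B : Finset V, wSets w A B = ∑ p ∈ A ×ˢ B, w p.1 p.2 := by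
    intro A B
    rw [Finset.sum_product]
    rfl
  -- bound on sums over rows: wSets w A B ≤ A.card
  have hrow : ∀ A B : Finset V, wSets w A B ≤ (A.card : ℝ) := by
    intro A B
    have : wSets w A B ≤ ∑ i ∈ A, ∑ j, w i j := by
      apply Finset.sum_le_sum
      intro i _
      exact Finset.sum_le_sum_of_subset_of_nonneg (Finset.subset_univ B)
        (fun j _ _ => hnonneg i j)
    calc wSets w A B ≤ ∑ i ∈ A, ∑ j, w i j := this
      _ = ∑ i ∈ A, (1 : ℝ) := by simp [hdeg]
      _ = (A.card : ℝ) := by simp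
  -- symmetry
  have hsymS : wSets w T S = wSets w S T := by
    unfold wSets
    rw [Finset.sum_comm]
    exact Finset.sum_congr rfl fun i _ => Finset.sum_congr rfl fun j _ => hsymm j i
  -- key: w(S,T) + w(T,S) = w(I,I) + sum over union ≤ w(I,I) + w(U,U)
  have hinter : (S ×ˢ T) ∩ (T ×ˢ S) = I ×ˢ I := by
    ext p
    simp only [Finset.mem_inter, Finset.mem_product, hI]
    tauto
  have hunion : (S ×ˢ T) ∪ (T ×ˢ S) ⊆ U ×ˢ U := by
    intro p hp
    simp only [Finset.mem_union, Finset.mem_product, hU] at hp ⊢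
    tauto
  have hkey : wSets w S T + wSets w T S ≤ wSets w I I + wSets w U U := by
    rw [hprod S T, hprod T S, hprod I I, hprod U U]
    have h := Finset.sum_union_inter (s₁ := S ×ˢ T) (s₂ := T ×ˢ S)
      (f := fun p : V × V => w p.1 p.2)
    rw [hinter] at h
    have hle : ∑ p ∈ (S ×ˢ T) ∪ (T ×ˢ S), w p.1 p.2 ≤ ∑ p ∈ U ×ˢ U, w p.1 p.2 :=
      Finset.sum_le_sum_of_subset_of_nonneg hunion (fun p _ _ => hnonneg p.1 p.2)
    linarith
  have hII : wSets w I I ≤ (I.card : ℝ) := hrow I I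
  have hUU : wSets w U U ≤ (U.card : ℝ) := hrow U U
  have hST : wSets w S T ≤ (S.card : ℝ) := hrow S T
  -- cardinalities
  have hcards : U.card + I.card = S.card + T.card := by
    rw [hU, hI]
    exact Finset.card_union_add_card_inter S T
  have hcardsR : (U.card : ℝ) + I.card = 2 * S.card := by
    have h : U.card + I.card = 2 * S.card := by omega
    exact_mod_cast h
  have hSU : S ⊆ U := Finset.subset_union_left
  have hsu : (S.card : ℝ) ≤ (U.card : ℝ) := by
    exact_mod_cast Finset.card_le_card hSU
  have hUne : U.Nonempty := hS.mono hSU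
  have hu0 : (0 : ℝ) < U.card := by exact_mod_cast Finset.card_pos.mpr hUne
  have hs0 : (0 : ℝ) < S.card := by exact_mod_cast Finset.card_pos.mpr hS
  refine ⟨U, hUne, ?_, ?_⟩
  · calc (U.card : ℝ) ≤ 2 * S.card := by
          have h0 : (0:ℝ) ≤ I.card := Nat.cast_nonneg _
          linarith
      _ ≤ δ * Fintype.card V := by linarith
  · -- main inequality
    have hmain : (U.card : ℝ) - wSets w U U ≤ 2 * S.card - 2 * wSets w S T := by
      rw [hsymS] at hkey
      linarith
    have e1 : 1 - wSets w U U / U.card = ((U.card : ℝ) - wSets w U U) / U.card := by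
      field_simp
    have e2 : 2 * (1 - wSets w S T / S.card)
        = (2 * S.card - 2 * wSets w S T) / S.card := by
      field_simp
    rw [e1, e2, div_le_div_iff₀ hu0 hs0]
    have hge : (0 : ℝ) ≤ 2 * S.card - 2 * wSets w S T := by linarith
    nlinarith [mul_le_mul_of_nonneg_right hmain (le_of_lt hs0),
      mul_le_mul_of_nonneg_left hsu hge]
end

section
/- Let d : Fin n → ℝ be antitone with values in [0,1], let t ∈ (0,1), let s := Σ_i d(i), and let x := Σ_i max(d(i) − t, 0). Let C : ℝ → ℝ be a concave function with C(0) ≥ 0. Then Σ_i d(i)·p(i) ≤ (1−t)·C(x/(1−t)) + t·C((s−x)/t) for any antitone p : Fin n → ℝ with partial sums bounded by C, i.e. Σ_{j<i} p(j) ≤ C(i) for all i. -/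
/-!
Summation by parts writes `∑ dᵢ pᵢ` as `∑ (dᵢ - dᵢ₊₁) Pᵢ`, where `Pᵢ` are the partial sums of `p`
and `d` is extended by `0`; the bound `Pᵢ ≤ C (i + 1)` turns this into a nonnegative combination of
values of `C`. Splitting `d = max (d - t) 0 + min d t` splits the combination into two parts of
total weight at most `1 - t` and `t`. Jensen's inequality bounds each part, once the missing
weight is placed at `0`, where `C ≥ 0`; the barycentres come out as `x / (1 - t)` and
`(s - x) / t` because `∑ (eᵢ - eᵢ₊₁) (i + 1) = ∑ eᵢ` for a sequence `e` vanishing at `n`.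
-/

open Finset

theorem ConcaveOn.sum_mul_le_mul_apply_sum_div {ι : Type*} {S : Set ℝ} {C : ℝ → ℝ}
    (hC : ConcaveOn ℝ S C) (hS0 : 0 ∈ S) (hC0 : 0 ≤ C 0) {s : Finset ι} {w z : ι → ℝ}
    (hw : ∀ i ∈ s, 0 ≤ w i) (hz : ∀ i ∈ s, z i ∈ S) {r : ℝ} (hr : 0 < r)
    (hwr : ∑ i ∈ s, w i ≤ r) :
    ∑ i ∈ s, w i * C (z i) ≤ r * C ((∑ i ∈ s, w i * z i) / r) := by
  -- the missing mass `r - ∑ w` is put on the point `0`, where `C` is nonnegative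
  let W : Option ι → ℝ := fun o => o.elim (1 - (∑ i ∈ s, w i) / r) (fun i => w i / r)
  let Z : Option ι → ℝ := fun o => o.elim 0 z
  have hW : ∀ o ∈ insertNone s, 0 ≤ W o := by
    rintro (_ | i) hi
    · simpa [W, sub_nonneg, div_le_one hr] using hwr
    · exact div_nonneg (hw i (by simpa using hi)) hr.le
  have hW1 : ∑ o ∈ insertNone s, W o = 1 := by
    simp [W, sum_insertNone, ← sum_div]
  have hZ : ∀ o ∈ insertNone s, Z o ∈ S := by
    rintro (_ | i) hi
    · exact hS0
    · exact hz i (by simpa using hi)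
  have jensen := hC.le_map_sum hW hW1 hZ
  simp only [sum_insertNone, W, Z, Option.elim, smul_eq_mul, mul_zero, zero_add] at jensen
  have hdeficit : 0 ≤ (1 - (∑ i ∈ s, w i) / r) * C 0 :=
    mul_nonneg (by rw [sub_nonneg, div_le_one hr]; exact hwr) hC0
  simp only [div_mul_eq_mul_div, ← sum_div] at jensen
  rw [← div_le_iff₀' hr]
  linarith

theorem sum_range_mul_by_parts {R : Type*} [CommRing R] (f g : ℕ → R) (n : ℕ) :
    ∑ i ∈ range n, f i * g i =
      ∑ i ∈ range n, (f i - f (i + 1)) * ∑ j ∈ range (i + 1), g j + f n * ∑ j ∈ range n, g j := by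
  induction n with
  | zero => simp
  | succ n ih => rw [sum_range_succ, ih, sum_range_succ, sum_range_succ g]; ring

theorem sum_range_sub_succ_mul_apply_le {C : ℝ → ℝ} (hC : ConcaveOn ℝ (Set.Ici 0) C)
    (hC0 : 0 ≤ C 0) {E : ℕ → ℝ} (hE : Antitone E) {n : ℕ} (hEn : E n = 0) {r : ℝ} (hr : 0 < r)
    (hE0 : E 0 ≤ r) :
    ∑ i ∈ range n, (E i - E (i + 1)) * C (i + 1) ≤ r * C ((∑ i ∈ range n, E i) / r) := by
  have hlayers : ∑ i ∈ range n, (E i - E (i + 1)) * ((i : ℝ) + 1) = ∑ i ∈ range n, E i := by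
    simpa [hEn] using (sum_range_mul_by_parts E (fun _ => (1 : ℝ)) n).symm
  rw [← hlayers]
  refine hC.sum_mul_le_mul_apply_sum_div Set.self_mem_Ici hC0
    (fun i _ => sub_nonneg.2 (hE i.le_succ)) (fun i _ => Set.mem_Ici.2 (by positivity)) hr ?_
  rw [sum_range_sub', hEn, sub_zero]
  exact hE0

theorem max_sub_zero_add_min {α : Type*} [AddCommGroup α] [LinearOrder α] [IsOrderedAddMonoid α]
    (a t : α) : max (a - t) 0 + min a t = a := by
  rw [← sub_self t, max_sub_sub_right, sub_add_eq_add_sub, add_comm, min_add_max,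
    add_sub_cancel_right]

theorem sum_range_mul_le_of_sum_range_le {C : ℝ → ℝ} (hC : ConcaveOn ℝ (Set.Ici 0) C)
    (hC0 : 0 ≤ C 0) {D q : ℕ → ℝ} (hD : Antitone D) {n : ℕ} (hDn : D n = 0) (hD0 : D 0 ≤ 1)
    {t : ℝ} (ht0 : 0 < t) (ht1 : t < 1)
    (hq : ∀ i < n, ∑ j ∈ range (i + 1), q j ≤ C (i + 1)) :
    ∑ i ∈ range n, D i * q i ≤
      (1 - t) * C ((∑ i ∈ range n, max (D i - t) 0) / (1 - t)) +
        t * C ((∑ i ∈ range n, min (D i) t) / t) := by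
  set E : ℕ → ℝ := fun i => max (D i - t) 0
  set F : ℕ → ℝ := fun i => min (D i) t
  have hEF : ∀ i, E i + F i = D i := fun i => max_sub_zero_add_min (D i) t
  have hE : Antitone E := fun i j hij => max_le_max (sub_le_sub_right (hD hij) t) le_rfl
  have hF : Antitone F := fun i j hij => min_le_min (hD hij) le_rfl
  calc ∑ i ∈ range n, D i * q i
      = ∑ i ∈ range n, (D i - D (i + 1)) * ∑ j ∈ range (i + 1), q j := by
        rw [sum_range_mul_by_parts, hDn, zero_mul, add_zero]
    _ ≤ ∑ i ∈ range n, (D i - D (i + 1)) * C (i + 1) :=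
        sum_le_sum fun i hi =>
          mul_le_mul_of_nonneg_left (hq i (mem_range.1 hi)) (sub_nonneg.2 (hD i.le_succ))
    _ = ∑ i ∈ range n, (E i - E (i + 1)) * C (i + 1) +
          ∑ i ∈ range n, (F i - F (i + 1)) * C (i + 1) := by
        rw [← sum_add_distrib]
        refine sum_congr rfl fun i _ => ?_
        rw [← hEF i, ← hEF (i + 1)]
        ring
    _ ≤ _ := add_le_add
        (sum_range_sub_succ_mul_apply_le hC hC0 hE (by simp [E, hDn, ht0.le]) (by linarith)
          (max_le (by linarith) (by linarith)))
        (sum_range_sub_succ_mul_apply_le hC hC0 hF (by simp [F, hDn, ht0.le]) ht0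
          (min_le_right _ _))

theorem Antitone.extend_val_zero {α : Type*} [Preorder α] [Zero α] {n : ℕ} {f : Fin n → α}
    (hf : Antitone f) (hf0 : 0 ≤ f) : Antitone (Function.extend Fin.val f 0) := by
  intro a b hab
  by_cases hb : b < n
  · obtain ⟨b, rfl⟩ : ∃ j : Fin n, (j : ℕ) = b := ⟨⟨b, hb⟩, rfl⟩
    obtain ⟨a, rfl⟩ : ∃ i : Fin n, (i : ℕ) = a := ⟨⟨a, hab.trans_lt b.isLt⟩, rfl⟩
    rw [Fin.val_injective.extend_apply, Fin.val_injective.extend_apply]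
    exact hf hab
  · rw [Function.extend_apply' _ _ _ fun ⟨i, hi⟩ => hb (hi ▸ i.isLt)]
    exact Function.extend_nonneg hf0 le_rfl a

theorem sum_filter_le_eq_sum_range_extend_val {M : Type*} [AddCommMonoid M] {n : ℕ}
    (f : Fin n → M) (i : Fin n) :
    ∑ j ∈ univ.filter (· ≤ i), f j = ∑ j ∈ range (i + 1), Function.extend Fin.val f 0 j := by
  rw [Nat.range_succ_eq_Iic, ← Fin.map_valEmbedding_Iic, sum_map, filter_ge_eq_Iic]
  simp [Fin.val_injective.extend_apply]

theorem drop_by_upper_area_general (n : ℕ) (d p : Fin n → ℝ) (hd : Antitone d)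
    (h01 : ∀ i, d i ∈ Set.Icc (0 : ℝ) 1)
    (t : ℝ) (ht0 : 0 < t) (ht1 : t < 1)
    (C : ℝ → ℝ) (hC : ConcaveOn ℝ Set.univ C) (hC0 : 0 ≤ C 0)
    (hpC : ∀ i : Fin n, ∑ j ∈ univ.filter (fun j : Fin n => j ≤ i), p j ≤ C ((i : ℕ) + 1)) :
    ∑ i, d i * p i ≤
      (1 - t) * C ((∑ i, max (d i - t) 0) / (1 - t)) +
        t * C (((∑ i, d i) - ∑ i, max (d i - t) 0) / t) := by
  have hd0 : 0 ≤ d := fun i => (h01 i).1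
  have key := sum_range_mul_le_of_sum_range_le (hC.subset (Set.subset_univ _) (convex_Ici 0))
    hC0 (hd.extend_val_zero hd0) (n := n)
    (Function.extend_apply' _ _ _ fun ⟨i, hi⟩ => (hi ▸ i.isLt).ne rfl)
    (Function.extend_le_one (fun i => (h01 i).2) zero_le_one 0) ht0 ht1
    (q := Function.extend Fin.val p 0)
    fun i hi => sum_filter_le_eq_sum_range_extend_val p ⟨i, hi⟩ ▸ hpC ⟨i, hi⟩
  simp only [← Fin.sum_univ_eq_sum_range, Fin.val_injective.extend_apply] at key
  have hmin : ∑ i, min (d i) t = ∑ i, d i - ∑ i, max (d i - t) 0 := by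
    rw [eq_sub_iff_add_eq, ← sum_add_distrib]
    simp only [add_comm (min _ _), max_sub_zero_add_min]
  rwa [hmin] at key

theorem drop_by_upper_area (n : ℕ) (d p : Fin n → ℝ) (hd : Antitone d)
    (h01 : ∀ i, d i ∈ Set.Icc (0 : ℝ) 1)
    (t : ℝ) (ht0 : 0 < t) (ht1 : t < 1)
    (C : ℝ → ℝ) (hC : ConcaveOn ℝ Set.univ C) (hC0 : 0 ≤ C 0)
    (hp : Antitone p)
    (hpC : ∀ i : Fin n, ∑ j ∈ univ.filter (fun j : Fin n => j ≤ i), p j ≤ C ((i : ℕ) + 1)) :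
    ∑ i, d i * p i ≤
      (1 - t) * C ((∑ i, max (d i - t) 0) / (1 - t)) +
        t * C (((∑ i, d i) - ∑ i, max (d i - t) 0) / t) :=
  drop_by_upper_area_general n d p hd h01 t ht0 ht1 C hC hC0 hpC
end
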